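/- arXiv:1408.6371 — 7 statements merged into one kernel-verified Lean document; each statement's English description precedes it below -/
import Mathlib

section
/- Fix lattice parameters with $0 < \beta \le 1 \le \gamma < \alpha$, and set $N = (\alpha^2+\gamma^2)/2 - \beta^2 > 0$, $P = \alpha^2 - \gamma^2 > 0$. For a unit vector $e = (e_1,e_2,e_3) \in \mathbb{R}^3$, define $f_1(e) = \beta^2 e_1^2 + \tfrac{\alpha^2+\gamma^2}{2}(e_2^2+e_3^2) + (\alpha^2-\gamma^2)e_2e_3$ and similarly $f_2,\ldots,f_6$ corresponding to the six orthorhombic variants. Then $f_1(e) \ge f_i(e)$ for all $i = 2,\ldots,6$ if and only if $e_2 e_3 \ge 0$ and $|e_1| \le \min\{|e_2|, |e_3|\}$. -/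
/-!
Writing `M = (α² + γ²)/2` and `P = α² - γ²`, one has `f₁ - f₂ = 2 P e₂ e₃`, and the two
conditions `f₃ ≤ f₁`, `f₄ ≤ f₁` together say `P |e₁ e₃| ≤ (M - β²)(e₂² - e₁²) + P e₂ e₃`.
When `e₂ e₃ ≥ 0` this factors as `0 ≤ (|e₂| - |e₁|)((M - β²)(|e₁| + |e₂|) + P |e₃|)`, and the
second factor is positive as soon as `|e₁| > |e₂|`, so the pair is equivalent to `|e₁| ≤ |e₂|`.
The variants `f₅, f₆` give `|e₁| ≤ |e₃|` in the same way.
-/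

lemma mul_le_mul_sq_sub_sq_add_mul_iff {N P a b c : ℝ} (hN : 0 < N) (hP : 0 ≤ P)
    (ha : 0 ≤ a) (hb : 0 ≤ b) (hc : 0 ≤ c) :
    P * c * a ≤ N * (b ^ 2 - a ^ 2) + P * b * c ↔ a ≤ b := by
  have hfactor : N * (b ^ 2 - a ^ 2) + P * b * c - P * c * a
      = (b - a) * (N * (a + b) + P * c) := by ring
  rw [← sub_nonneg, hfactor]
  constructor
  · intro h
    by_contra! hba
    have hpos : 0 < N * (a + b) + P * c :=
      add_pos_of_pos_of_nonneg (mul_pos hN (by linarith)) (by positivity)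
    exact h.not_gt (mul_neg_of_neg_of_pos (by linarith) hpos)
  · intro hab
    exact mul_nonneg (sub_nonneg.2 hab) (by positivity)

lemma variant_pair_le_iff_abs_le {b M P x y z : ℝ} (hbM : b < M) (hP : 0 ≤ P)
    (hyz : 0 ≤ y * z) :
    (b * y ^ 2 + M * (x ^ 2 + z ^ 2) + P * x * z ≤ b * x ^ 2 + M * (y ^ 2 + z ^ 2) + P * y * z ∧
      b * y ^ 2 + M * (x ^ 2 + z ^ 2) - P * x * z ≤ b * x ^ 2 + M * (y ^ 2 + z ^ 2) + P * y * z)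
      ↔ |x| ≤ |y| := by
  have hgap : ∀ s, b * y ^ 2 + M * (x ^ 2 + z ^ 2) + s ≤ b * x ^ 2 + M * (y ^ 2 + z ^ 2) + P * y * z
      ↔ s ≤ (M - b) * (y ^ 2 - x ^ 2) + P * y * z := fun s => by
    constructor <;> intro h <;> linarith
  have hyz_abs : y * z = |y| * |z| := by rw [← abs_mul, abs_of_nonneg hyz]
  rw [sub_eq_add_neg, hgap, hgap, ← abs_le', abs_mul, abs_mul, abs_of_nonneg hP,
    mul_assoc P y z, hyz_abs, ← sq_abs x, ← sq_abs y, mul_right_comm P, ← mul_assoc P]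
  exact mul_le_mul_sq_sub_sq_add_mul_iff (by linarith) hP (abs_nonneg x) (abs_nonneg y) (abs_nonneg z)

theorem stmt_6_general (α β γ : ℝ) (hβ : 0 < β) (hβ1 : β ≤ 1) (hγ : 1 ≤ γ) (hγα : γ < α)
    (e₁ e₂ e₃ : ℝ) :
    (let f₁ := β ^ 2 * e₁ ^ 2 + (α ^ 2 + γ ^ 2) / 2 * (e₂ ^ 2 + e₃ ^ 2) + (α ^ 2 - γ ^ 2) * e₂ * e₃
     let f₂ := β ^ 2 * e₁ ^ 2 + (α ^ 2 + γ ^ 2) / 2 * (e₂ ^ 2 + e₃ ^ 2) - (α ^ 2 - γ ^ 2) * e₂ * e₃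
     let f₃ := β ^ 2 * e₂ ^ 2 + (α ^ 2 + γ ^ 2) / 2 * (e₁ ^ 2 + e₃ ^ 2) + (α ^ 2 - γ ^ 2) * e₁ * e₃
     let f₄ := β ^ 2 * e₂ ^ 2 + (α ^ 2 + γ ^ 2) / 2 * (e₁ ^ 2 + e₃ ^ 2) - (α ^ 2 - γ ^ 2) * e₁ * e₃
     let f₅ := β ^ 2 * e₃ ^ 2 + (α ^ 2 + γ ^ 2) / 2 * (e₁ ^ 2 + e₂ ^ 2) + (α ^ 2 - γ ^ 2) * e₁ * e₂
     let f₆ := β ^ 2 * e₃ ^ 2 + (α ^ 2 + γ ^ 2) / 2 * (e₁ ^ 2 + e₂ ^ 2) - (α ^ 2 - γ ^ 2) * e₁ * e₂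
     f₂ ≤ f₁ ∧ f₃ ≤ f₁ ∧ f₄ ≤ f₁ ∧ f₅ ≤ f₁ ∧ f₆ ≤ f₁) ↔
    (0 ≤ e₂ * e₃ ∧ |e₁| ≤ min |e₂| |e₃|) := by
  have hP : 0 < α ^ 2 - γ ^ 2 := by nlinarith
  have hβM : β ^ 2 < (α ^ 2 + γ ^ 2) / 2 := by nlinarith
  dsimp only
  set M := (α ^ 2 + γ ^ 2) / 2
  set P := α ^ 2 - γ ^ 2
  have h₂ : β ^ 2 * e₁ ^ 2 + M * (e₂ ^ 2 + e₃ ^ 2) - P * e₂ * e₃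
      ≤ β ^ 2 * e₁ ^ 2 + M * (e₂ ^ 2 + e₃ ^ 2) + P * e₂ * e₃ ↔ 0 ≤ e₂ * e₃ := by
    rw [← sub_nonneg, show β ^ 2 * e₁ ^ 2 + M * (e₂ ^ 2 + e₃ ^ 2) + P * e₂ * e₃
      - (β ^ 2 * e₁ ^ 2 + M * (e₂ ^ 2 + e₃ ^ 2) - P * e₂ * e₃) = 2 * P * (e₂ * e₃) by ring]
    exact mul_nonneg_iff_of_pos_left (by positivity)
  rw [le_min_iff, h₂]
  refine and_congr_right fun h₂₃ => ?_
  rw [← and_assoc]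
  refine and_congr (variant_pair_le_iff_abs_le hβM hP.le h₂₃) ?_
  have h₁₃ := variant_pair_le_iff_abs_le hβM hP.le (mul_comm e₂ e₃ ▸ h₂₃) (x := e₁)
  rwa [show β ^ 2 * e₁ ^ 2 + M * (e₃ ^ 2 + e₂ ^ 2) + P * e₃ * e₂
      = β ^ 2 * e₁ ^ 2 + M * (e₂ ^ 2 + e₃ ^ 2) + P * e₂ * e₃ by ring] at h₁₃

/-- Characterization of maximal directions for the variant `U₁` of the
cubic-to-orthorhombic transformation: `|U₁ e|² ≥ |Uᵢ e|²` for all `i` iff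
`e₂ e₃ ≥ 0` and `|e₁| ≤ min(|e₂|, |e₃|)`. -/
theorem stmt_6 (α β γ : ℝ) (hβ : 0 < β) (hβ1 : β ≤ 1) (hγ : 1 ≤ γ) (hγα : γ < α)
    (e₁ e₂ e₃ : ℝ) (hunit : e₁ ^ 2 + e₂ ^ 2 + e₃ ^ 2 = 1) :
    (let f₁ := β ^ 2 * e₁ ^ 2 + (α ^ 2 + γ ^ 2) / 2 * (e₂ ^ 2 + e₃ ^ 2) + (α ^ 2 - γ ^ 2) * e₂ * e₃
     let f₂ := β ^ 2 * e₁ ^ 2 + (α ^ 2 + γ ^ 2) / 2 * (e₂ ^ 2 + e₃ ^ 2) - (α ^ 2 - γ ^ 2) * e₂ * e₃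
     let f₃ := β ^ 2 * e₂ ^ 2 + (α ^ 2 + γ ^ 2) / 2 * (e₁ ^ 2 + e₃ ^ 2) + (α ^ 2 - γ ^ 2) * e₁ * e₃
     let f₄ := β ^ 2 * e₂ ^ 2 + (α ^ 2 + γ ^ 2) / 2 * (e₁ ^ 2 + e₃ ^ 2) - (α ^ 2 - γ ^ 2) * e₁ * e₃
     let f₅ := β ^ 2 * e₃ ^ 2 + (α ^ 2 + γ ^ 2) / 2 * (e₁ ^ 2 + e₂ ^ 2) + (α ^ 2 - γ ^ 2) * e₁ * e₂
     let f₆ := β ^ 2 * e₃ ^ 2 + (α ^ 2 + γ ^ 2) / 2 * (e₁ ^ 2 + e₂ ^ 2) - (α ^ 2 - γ ^ 2) * e₁ * e₂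
     f₂ ≤ f₁ ∧ f₃ ≤ f₁ ∧ f₄ ≤ f₁ ∧ f₅ ≤ f₁ ∧ f₆ ≤ f₁) ↔
    (0 ≤ e₂ * e₃ ∧ |e₁| ≤ min |e₂| |e₃|) :=
  stmt_6_general α β γ hβ hβ1 hγ hγα e₁ e₂ e₃
end

section
/- Fix lattice parameters with $0 < \beta \le 1 \le \gamma < \alpha$ and assume $2\alpha^2 + \beta^2 \ge 3$. If $e = (e_1,e_2,e_3)$ is a unit vector with $e_2 e_3 \ge 0$ and $|e_1| \le \min\{|e_2|,|e_3|\}$, then $\beta^2 e_1^2 + \tfrac{\alpha^2+\gamma^2}{2}(e_2^2+e_3^2) + (\alpha^2-\gamma^2)e_2 e_3 \ge 1$. -/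
/-! Write `t = e₁²`. The hypotheses on `e` give `t ≤ e₂ e₃` and `3t ≤ 1`, and since `α² ≥ γ²` and
`e₂² + e₃² = 1 - t`, the quadratic form is at least the affine function
`(α² + γ²)/2 + (β² + α²/2 - 3γ²/2) t`. This is `(α² + γ²)/2 ≥ 1` at `t = 0` and `(2α² + β²)/3 ≥ 1`
at `t = 1/3`, hence at least `1` on the whole interval `[0, 1/3]`. -/

lemma le_add_mul_of_le_of_le_add_mul {c a b r t : ℝ} (h₀ : c ≤ a) (hr : c ≤ a + b * r)
    (ht₀ : 0 ≤ t) (htr : t ≤ r) : c ≤ a + b * t := by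
  rcases le_total 0 b with hb | hb
  · nlinarith [mul_nonneg hb ht₀]
  · nlinarith [mul_le_mul_of_nonpos_left htr hb]

lemma sq_le_mul_of_abs_le_min {a b c : ℝ} (h : |a| ≤ min |b| |c|) (hbc : 0 ≤ b * c) :
    a ^ 2 ≤ b * c := by
  calc a ^ 2 = |a| * |a| := by rw [← sq_abs, sq]
    _ ≤ |b| * |c| := mul_le_mul (le_min_iff.mp h).1 (le_min_iff.mp h).2 (abs_nonneg a)
        (abs_nonneg b)
    _ = b * c := by rw [← abs_mul, abs_of_nonneg hbc]

lemma two_mul_sq_le_of_abs_le_min {a b c : ℝ} (h : |a| ≤ min |b| |c|) :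
    2 * a ^ 2 ≤ b ^ 2 + c ^ 2 := by
  have hb : a ^ 2 ≤ b ^ 2 := sq_le_sq.mpr (le_min_iff.mp h).1
  have hc : a ^ 2 ≤ c ^ 2 := sq_le_sq.mpr (le_min_iff.mp h).2
  linarith

theorem stmt_7_general (α β γ : ℝ) (hγ : 1 ≤ γ) (hγα : γ < α)
    (hA2 : 3 ≤ 2 * α ^ 2 + β ^ 2)
    (e₁ e₂ e₃ : ℝ) (hunit : e₁ ^ 2 + e₂ ^ 2 + e₃ ^ 2 = 1)
    (hsign : 0 ≤ e₂ * e₃) (hmin : |e₁| ≤ min |e₂| |e₃|) :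
    1 ≤ β ^ 2 * e₁ ^ 2 + (α ^ 2 + γ ^ 2) / 2 * (e₂ ^ 2 + e₃ ^ 2)
        + (α ^ 2 - γ ^ 2) * e₂ * e₃ := by
  have hprod : e₁ ^ 2 ≤ e₂ * e₃ := sq_le_mul_of_abs_le_min hmin hsign
  have hthird : e₁ ^ 2 ≤ 1 / 3 := by linarith [two_mul_sq_le_of_abs_le_min hmin]
  have hγ2 : 1 ≤ γ ^ 2 := one_le_pow₀ hγ
  have hγα2 : γ ^ 2 ≤ α ^ 2 := pow_le_pow_left₀ (by linarith) hγα.le 2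
  have hlower : (α ^ 2 + γ ^ 2) / 2 + (β ^ 2 + α ^ 2 / 2 - 3 * γ ^ 2 / 2) * e₁ ^ 2 ≤
      β ^ 2 * e₁ ^ 2 + (α ^ 2 + γ ^ 2) / 2 * (e₂ ^ 2 + e₃ ^ 2) + (α ^ 2 - γ ^ 2) * e₂ * e₃ := by
    nlinarith [mul_le_mul_of_nonneg_left hprod (sub_nonneg.mpr hγα2)]
  refine le_trans (le_add_mul_of_le_of_le_add_mul ?_ ?_ (sq_nonneg e₁) hthird) hlower
  · linarith
  · linarith

/-- If `2α² + β² ≥ 3` and `e` is a unit vector with `e₂ e₃ ≥ 0` and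
`|e₁| ≤ min(|e₂|, |e₃|)`, then `|U₁ e|² ≥ 1`. -/
theorem stmt_7 (α β γ : ℝ) (hβ : 0 < β) (hβ1 : β ≤ 1) (hγ : 1 ≤ γ) (hγα : γ < α)
    (hA2 : 3 ≤ 2 * α ^ 2 + β ^ 2)
    (e₁ e₂ e₃ : ℝ) (hunit : e₁ ^ 2 + e₂ ^ 2 + e₃ ^ 2 = 1)
    (hsign : 0 ≤ e₂ * e₃) (hmin : |e₁| ≤ min |e₂| |e₃|) :
    1 ≤ β ^ 2 * e₁ ^ 2 + (α ^ 2 + γ ^ 2) / 2 * (e₂ ^ 2 + e₃ ^ 2)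
        + (α ^ 2 - γ ^ 2) * e₂ * e₃ :=
  stmt_7_general α β γ hγ hγα hA2 e₁ e₂ e₃ hunit hsign hmin
end

section
/- Fix lattice parameters with $0 < \beta \le 1 \le \gamma < \alpha$, set $A = \alpha^2\gamma^2 - \beta^2(\alpha^2+\gamma^2)/2$ and $B = \beta^2(\alpha^2-\gamma^2)$, and assume $A > B > 0$. For a unit vector $e = (e_1, e_2, e_3)$, define $g_1(e) = \alpha^2\gamma^2 e_1^2 + \beta^2\tfrac{\alpha^2+\gamma^2}{2}(e_2^2+e_3^2) + \beta^2(\gamma^2-\alpha^2)e_2e_3$ and analogously $g_2,\ldots,g_6$ for the other variants. Then $g_1(e) > g_i(e)$ for all $i = 2,\ldots,6$ if and only if $e_2 e_3 < 0$ and $|e_1| > \max\{|e_2|, |e_3|\}$. -/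
/-! After `g₂ < g₁`, which says `e₂ e₃ < 0`, the remaining four comparisons come in pairs whose
differences factor as `(e₁ - e₂) (A (e₁ + e₂) + B e₃)` and `(e₁ + e₂) (A (e₁ - e₂) - B e₃)`
(and the same with `e₂, e₃` swapped). When `e₂ e₃ ≤ 0` the smaller of the two is
`(|e₁| - |e₂|) (A (|e₁| + |e₂|) - B |e₃|)`, so everything reduces to sign conditions on
`a = |e₁|, b = |e₂|, c = |e₃|`. Since `B < A`, positivity of `(a - b) (A (a + b) - B c)` with
`a ≤ b` forces `b < c`; applied to both pairs this is contradictory, so `a` must dominate. -/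

theorem min_cross_eq_abs {A B x y z : ℝ} (hB : 0 ≤ B) (hyz : y * z ≤ 0) :
    min ((x - y) * (A * (x + y) + B * z)) ((x + y) * (A * (x - y) - B * z)) =
      (|x| - |y|) * (A * (|x| + |y|) - B * |z|) := by
  have hy : |y| * |z| = -(y * z) := by rw [← abs_mul, abs_of_nonpos hyz]
  have hx2 := sq_abs x
  have hy2 := sq_abs y
  rcases le_total (x * z) 0 with hxz | hxz
  · have hx : |x| * |z| = -(x * z) := by rw [← abs_mul, abs_of_nonpos hxz]
    rw [min_eq_left (by nlinarith [mul_nonpos_of_nonneg_of_nonpos hB hxz])]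
    linear_combination (-A) * hx2 + A * hy2 + B * hx - B * hy
  · have hx : |x| * |z| = x * z := by rw [← abs_mul, abs_of_nonneg hxz]
    rw [min_eq_right (by nlinarith [mul_nonneg hB hxz])]
    linear_combination (-A) * hx2 + A * hy2 + B * hx - B * hy

section
variable {A B a b c : ℝ}

theorem sub_mul_pos_of_lt (hA : 0 < A) (hBA : B ≤ A) (hb : 0 ≤ b) (hc : 0 ≤ c)
    (hba : b < a) (hca : c < a) : 0 < (a - b) * (A * (a + b) - B * c) := by
  refine mul_pos (sub_pos.2 hba) ?_
  nlinarith [mul_le_mul_of_nonneg_right hBA hc, mul_lt_mul_of_pos_left hca hA]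

theorem lt_of_sub_mul_pos_of_le (hB : 0 ≤ B) (hBA : B ≤ A) (ha : 0 ≤ a) (hb : 0 ≤ b)
    (h : 0 < (a - b) * (A * (a + b) - B * c)) (hab : a ≤ b) : b < c := by
  by_contra! hcb
  have : B * c ≤ A * (a + b) := by
    nlinarith [mul_le_mul_of_nonneg_left hcb hB, mul_le_mul_of_nonneg_right hBA hb]
  nlinarith [mul_nonpos_of_nonpos_of_nonneg (sub_nonpos.2 hab) (sub_nonneg.2 this)]

theorem sub_mul_pos_and_sub_mul_pos_iff (hA : 0 < A) (hB : 0 ≤ B) (hBA : B ≤ A)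
    (ha : 0 ≤ a) (hb : 0 ≤ b) (hc : 0 ≤ c) :
    (0 < (a - b) * (A * (a + b) - B * c) ∧ 0 < (a - c) * (A * (a + c) - B * b)) ↔
      b < a ∧ c < a := by
  constructor
  · rintro ⟨hab, hac⟩
    by_contra! hle
    by_cases hba : b < a
    · exact (lt_of_sub_mul_pos_of_le hB hBA ha hc hac (hle hba)).not_gt
        (hba.trans_le (hle hba))
    · rw [not_lt] at hba
      have hbc := lt_of_sub_mul_pos_of_le hB hBA ha hb hab hba
      exact (lt_of_sub_mul_pos_of_le hB hBA ha hc hac (hba.trans hbc.le)).not_gt hbc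
  · rintro ⟨hba, hca⟩
    exact ⟨sub_mul_pos_of_lt hA hBA hb hc hba hca, sub_mul_pos_of_lt hA hBA hc hb hca hba⟩

end

theorem cross_conditions_iff {A B e₁ e₂ e₃ : ℝ} (hB : 0 < B) (hBA : B < A) :
    (0 < -(2 * B * (e₂ * e₃)) ∧
      0 < (e₁ - e₂) * (A * (e₁ + e₂) + B * e₃) ∧ 0 < (e₁ + e₂) * (A * (e₁ - e₂) - B * e₃) ∧
      0 < (e₁ - e₃) * (A * (e₁ + e₃) + B * e₂) ∧ 0 < (e₁ + e₃) * (A * (e₁ - e₃) - B * e₂)) ↔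
      e₂ * e₃ < 0 ∧ max |e₂| |e₃| < |e₁| := by
  have hsign : 0 < -(2 * B * (e₂ * e₃)) ↔ e₂ * e₃ < 0 := by
    constructor <;> intro h <;> nlinarith
  rw [hsign]
  refine and_congr_right fun hyz => ?_
  rw [← and_assoc, ← lt_min_iff, ← lt_min_iff, min_cross_eq_abs hB.le hyz.le,
    min_cross_eq_abs hB.le (by linarith [mul_comm e₂ e₃]), max_lt_iff]
  exact sub_mul_pos_and_sub_mul_pos_iff (hB.trans hBA) hB.le hBA.le
    (abs_nonneg _) (abs_nonneg _) (abs_nonneg _)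

theorem stmt_8_general (α β γ : ℝ)
    (hB : 0 < β ^ 2 * (α ^ 2 - γ ^ 2))
    (hAB : β ^ 2 * (α ^ 2 - γ ^ 2) < α ^ 2 * γ ^ 2 - β ^ 2 * (α ^ 2 + γ ^ 2) / 2)
    (e₁ e₂ e₃ : ℝ) :
    (let g₁ := α ^ 2 * γ ^ 2 * e₁ ^ 2 + β ^ 2 * ((α ^ 2 + γ ^ 2) / 2) * (e₂ ^ 2 + e₃ ^ 2)
                 + β ^ 2 * (γ ^ 2 - α ^ 2) * e₂ * e₃
     let g₂ := α ^ 2 * γ ^ 2 * e₁ ^ 2 + β ^ 2 * ((α ^ 2 + γ ^ 2) / 2) * (e₂ ^ 2 + e₃ ^ 2)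
                 - β ^ 2 * (γ ^ 2 - α ^ 2) * e₂ * e₃
     let g₃ := α ^ 2 * γ ^ 2 * e₂ ^ 2 + β ^ 2 * ((α ^ 2 + γ ^ 2) / 2) * (e₁ ^ 2 + e₃ ^ 2)
                 + β ^ 2 * (γ ^ 2 - α ^ 2) * e₁ * e₃
     let g₄ := α ^ 2 * γ ^ 2 * e₂ ^ 2 + β ^ 2 * ((α ^ 2 + γ ^ 2) / 2) * (e₁ ^ 2 + e₃ ^ 2)
                 - β ^ 2 * (γ ^ 2 - α ^ 2) * e₁ * e₃
     let g₅ := α ^ 2 * γ ^ 2 * e₃ ^ 2 + β ^ 2 * ((α ^ 2 + γ ^ 2) / 2) * (e₁ ^ 2 + e₂ ^ 2)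
                 + β ^ 2 * (γ ^ 2 - α ^ 2) * e₁ * e₂
     let g₆ := α ^ 2 * γ ^ 2 * e₃ ^ 2 + β ^ 2 * ((α ^ 2 + γ ^ 2) / 2) * (e₁ ^ 2 + e₂ ^ 2)
                 - β ^ 2 * (γ ^ 2 - α ^ 2) * e₁ * e₂
     g₂ < g₁ ∧ g₃ < g₁ ∧ g₄ < g₁ ∧ g₅ < g₁ ∧ g₆ < g₁) ↔
    (e₂ * e₃ < 0 ∧ max |e₂| |e₃| < |e₁|) := by
  rw [← cross_conditions_iff hB hAB]
  refine and_congr ?_ (and_congr ?_ (and_congr ?_ (and_congr ?_ ?_))) <;>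
    rw [← sub_pos] <;> ring_nf

/-- Characterization of maximal directions for `U₁⁻¹` (via cofactors):
`|cof U₁ e|² > |cof Uᵢ e|²` for all `i ≠ 1` iff `e₂ e₃ < 0` and
`|e₁| > max(|e₂|, |e₃|)`. -/
theorem stmt_8 (α β γ : ℝ) (hβ : 0 < β) (hβ1 : β ≤ 1) (hγ : 1 ≤ γ) (hγα : γ < α)
    (hB : 0 < β ^ 2 * (α ^ 2 - γ ^ 2))
    (hAB : β ^ 2 * (α ^ 2 - γ ^ 2) < α ^ 2 * γ ^ 2 - β ^ 2 * (α ^ 2 + γ ^ 2) / 2)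
    (e₁ e₂ e₃ : ℝ) (hunit : e₁ ^ 2 + e₂ ^ 2 + e₃ ^ 2 = 1) :
    (let g₁ := α ^ 2 * γ ^ 2 * e₁ ^ 2 + β ^ 2 * ((α ^ 2 + γ ^ 2) / 2) * (e₂ ^ 2 + e₃ ^ 2)
                 + β ^ 2 * (γ ^ 2 - α ^ 2) * e₂ * e₃
     let g₂ := α ^ 2 * γ ^ 2 * e₁ ^ 2 + β ^ 2 * ((α ^ 2 + γ ^ 2) / 2) * (e₂ ^ 2 + e₃ ^ 2)
                 - β ^ 2 * (γ ^ 2 - α ^ 2) * e₂ * e₃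
     let g₃ := α ^ 2 * γ ^ 2 * e₂ ^ 2 + β ^ 2 * ((α ^ 2 + γ ^ 2) / 2) * (e₁ ^ 2 + e₃ ^ 2)
                 + β ^ 2 * (γ ^ 2 - α ^ 2) * e₁ * e₃
     let g₄ := α ^ 2 * γ ^ 2 * e₂ ^ 2 + β ^ 2 * ((α ^ 2 + γ ^ 2) / 2) * (e₁ ^ 2 + e₃ ^ 2)
                 - β ^ 2 * (γ ^ 2 - α ^ 2) * e₁ * e₃
     let g₅ := α ^ 2 * γ ^ 2 * e₃ ^ 2 + β ^ 2 * ((α ^ 2 + γ ^ 2) / 2) * (e₁ ^ 2 + e₂ ^ 2)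
                 + β ^ 2 * (γ ^ 2 - α ^ 2) * e₁ * e₂
     let g₆ := α ^ 2 * γ ^ 2 * e₃ ^ 2 + β ^ 2 * ((α ^ 2 + γ ^ 2) / 2) * (e₁ ^ 2 + e₂ ^ 2)
                 - β ^ 2 * (γ ^ 2 - α ^ 2) * e₁ * e₂
     g₂ < g₁ ∧ g₃ < g₁ ∧ g₄ < g₁ ∧ g₅ < g₁ ∧ g₆ < g₁) ↔
    (e₂ * e₃ < 0 ∧ max |e₂| |e₃| < |e₁|) :=
  stmt_8_general α β γ hB hAB e₁ e₂ e₃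
end

section
/- Fix lattice parameters with $0 < \beta \le 1 \le \gamma < \alpha$ and assume $\alpha^2\gamma^2 + \alpha^2\beta^2 + \beta^2\gamma^2 \ge 3$. If $e = (e_1,e_2,e_3)$ is a unit vector with $e_2 e_3 < 0$ and $|e_1| > \max\{|e_2|,|e_3|\}$, then $\alpha^2\gamma^2 e_1^2 + \beta^2\tfrac{\alpha^2+\gamma^2}{2}(e_2^2+e_3^2) + \beta^2(\gamma^2-\alpha^2)e_2 e_3 > 1$. -/
/-!
Write `a = α²γ²`, `b = α²β²`, `c = β²γ²`, so the quadratic form is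
`a e₁² + (b + c)/2 (e₂² + e₃²) + (b - c) |e₂ e₃|`. The cross term is positive since `b > c`.
The rest is a convex combination of `a` and `(b + c)/2 ≤ a` in which `a` carries the weight
`e₁² > 1/3`, hence it is at least `(a + b + c)/3 ≥ 1`.
-/

lemma one_third_lt_sq_of_max_abs_lt {x y z : ℝ} (hunit : x ^ 2 + y ^ 2 + z ^ 2 = 1)
    (hmax : max |y| |z| < |x|) : 1 / 3 < x ^ 2 := by
  have hy : y ^ 2 < x ^ 2 := sq_lt_sq.mpr (lt_of_le_of_lt (le_max_left _ _) hmax)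
  have hz : z ^ 2 < x ^ 2 := sq_lt_sq.mpr (lt_of_le_of_lt (le_max_right _ _) hmax)
  linarith

lemma mean_le_mul_add_mul_one_sub {a m t : ℝ} (hma : m ≤ a) (ht : 1 / 3 ≤ t) :
    (a + 2 * m) / 3 ≤ a * t + m * (1 - t) := by
  nlinarith

lemma sq_mul_add_sq_div_two_le_sq_mul_sq {α β γ : ℝ} (hβ1 : β ^ 2 ≤ 1) (hα : 1 ≤ α)
    (hγ : 1 ≤ γ) : β ^ 2 * ((α ^ 2 + γ ^ 2) / 2) ≤ α ^ 2 * γ ^ 2 := by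
  have hα2 : 1 ≤ α ^ 2 := one_le_pow₀ hα
  have hγ2 : 1 ≤ γ ^ 2 := one_le_pow₀ hγ
  have hmean : (α ^ 2 + γ ^ 2) / 2 ≤ α ^ 2 * γ ^ 2 := by nlinarith
  calc β ^ 2 * ((α ^ 2 + γ ^ 2) / 2) ≤ 1 * ((α ^ 2 + γ ^ 2) / 2) := by gcongr
    _ ≤ α ^ 2 * γ ^ 2 := by linarith

/-- If `α²γ² + α²β² + β²γ² ≥ 3` and `e` is a unit vector with `e₂ e₃ < 0` and
`|e₁| > max(|e₂|, |e₃|)`, then `|cof U₁ e|² > 1`. -/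
theorem stmt_9 (α β γ : ℝ) (hβ : 0 < β) (hβ1 : β ≤ 1) (hγ : 1 ≤ γ) (hγα : γ < α)
    (hA3 : 3 ≤ α ^ 2 * γ ^ 2 + α ^ 2 * β ^ 2 + β ^ 2 * γ ^ 2)
    (e₁ e₂ e₃ : ℝ) (hunit : e₁ ^ 2 + e₂ ^ 2 + e₃ ^ 2 = 1)
    (hsign : e₂ * e₃ < 0) (hmax : max |e₂| |e₃| < |e₁|) :
    1 < α ^ 2 * γ ^ 2 * e₁ ^ 2 + β ^ 2 * ((α ^ 2 + γ ^ 2) / 2) * (e₂ ^ 2 + e₃ ^ 2)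
        + β ^ 2 * (γ ^ 2 - α ^ 2) * e₂ * e₃ := by
  have he₁ := one_third_lt_sq_of_max_abs_lt hunit hmax
  have hm : β ^ 2 * ((α ^ 2 + γ ^ 2) / 2) ≤ α ^ 2 * γ ^ 2 :=
    sq_mul_add_sq_div_two_le_sq_mul_sq (pow_le_one₀ hβ.le hβ1) (hγ.trans hγα.le) hγ
  have hcross : 0 < β ^ 2 * (γ ^ 2 - α ^ 2) * e₂ * e₃ := by
    have hγα2 : γ ^ 2 - α ^ 2 < 0 := by nlinarith
    rw [mul_assoc]
    exact mul_pos_of_neg_of_neg (mul_neg_of_pos_of_neg (by positivity) hγα2) hsign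
  rw [show e₂ ^ 2 + e₃ ^ 2 = 1 - e₁ ^ 2 by linarith]
  calc (1 : ℝ) ≤ (α ^ 2 * γ ^ 2 + 2 * (β ^ 2 * ((α ^ 2 + γ ^ 2) / 2))) / 3 := by linarith
    _ ≤ α ^ 2 * γ ^ 2 * e₁ ^ 2 + β ^ 2 * ((α ^ 2 + γ ^ 2) / 2) * (1 - e₁ ^ 2) :=
      mean_le_mul_add_mul_one_sub hm he₁.le
    _ < _ := by linarith
end

section
/- Fix $0 < \beta \le 1 \le \gamma < \alpha$ with $A := \alpha^2\gamma^2 - \beta^2(\alpha^2+\gamma^2)/2 > B := \beta^2(\alpha^2-\gamma^2) > 0$. A unit vector $n = (n_1,n_2,n_3)$ admits a unit vector $e$ with $e_2e_3 \ge 0$, $|e_1| \le \min\{|e_2|,|e_3|\}$, and $e \cdot n = 0$, if and only if $n_2 n_3 \le 0$ or $|n_1| \ge |n_2| + |n_3|$. -/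
/-!
If `e₂e₃ ≥ 0` and `n₂n₃ > 0`, the terms `e₂n₂` and `e₃n₃` have the same sign, so with
`m = min |e₂| |e₃|` the relation `e · n = 0` gives
`m (|n₂| + |n₃|) ≤ |e₂n₂ + e₃n₃| = |e₁n₁| ≤ m |n₁|`; and `m > 0` since otherwise `n₂` or `n₃`
would vanish. Conversely, `(0, n₃, -n₂)` and `(-(n₂ + n₃), n₁, n₁)`, normalized, are
admissible directions orthogonal to `n` in the two cases.
-/

lemma abs_add_of_mul_nonneg {a b : ℝ} (h : 0 ≤ a * b) : |a + b| = |a| + |b| :=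
  (abs_add_eq_add_abs_iff a b).2 (mul_nonneg_iff.1 h)

lemma min_abs_pos_of_orthogonal {e₁ e₂ e₃ n₁ n₂ n₃ : ℝ}
    (hu : e₁ ^ 2 + e₂ ^ 2 + e₃ ^ 2 = 1) (hmin : |e₁| ≤ min |e₂| |e₃|)
    (hdot : e₁ * n₁ + e₂ * n₂ + e₃ * n₃ = 0) (hn : n₂ * n₃ ≠ 0) :
    0 < min |e₂| |e₃| := by
  by_contra! hm
  have he₁ : e₁ = 0 := abs_nonpos_iff.1 (hmin.trans hm)
  subst he₁
  rcases min_le_iff.1 hm with h | h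
  · have he₂ : e₂ = 0 := abs_nonpos_iff.1 h
    subst he₂
    have : n₃ = 0 := by linear_combination (-n₃) * hu + e₃ * hdot
    simp [this] at hn
  · have he₃ : e₃ = 0 := abs_nonpos_iff.1 h
    subst he₃
    have : n₂ = 0 := by linear_combination (-n₂) * hu + e₂ * hdot
    simp [this] at hn

lemma abs_add_abs_le_abs_of_orthogonal {e₁ e₂ e₃ n₁ n₂ n₃ : ℝ}
    (hu : e₁ ^ 2 + e₂ ^ 2 + e₃ ^ 2 = 1) (he : 0 ≤ e₂ * e₃) (hmin : |e₁| ≤ min |e₂| |e₃|)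
    (hdot : e₁ * n₁ + e₂ * n₂ + e₃ * n₃ = 0) (hn : 0 < n₂ * n₃) :
    |n₂| + |n₃| ≤ |n₁| := by
  set m := min |e₂| |e₃|
  have hm : 0 < m := min_abs_pos_of_orthogonal hu hmin hdot hn.ne'
  have hsign : 0 ≤ e₂ * n₂ * (e₃ * n₃) := by linear_combination mul_nonneg he hn.le
  refine le_of_mul_le_mul_left ?_ hm
  calc m * (|n₂| + |n₃|) ≤ |e₂| * |n₂| + |e₃| * |n₃| := by
        nlinarith [min_le_left |e₂| |e₃|, min_le_right |e₂| |e₃|, abs_nonneg n₂, abs_nonneg n₃]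
    _ = |e₂ * n₂ + e₃ * n₃| := by rw [abs_add_of_mul_nonneg hsign, abs_mul, abs_mul]
    _ = |e₁| * |n₁| := by rw [← abs_mul, ← abs_neg]; congr 1; linarith
    _ ≤ m * |n₁| := mul_le_mul_of_nonneg_right hmin (abs_nonneg n₁)

lemma exists_unit_orthogonal_of_ne_zero {v₁ v₂ v₃ n₁ n₂ n₃ : ℝ}
    (hv : v₁ ^ 2 + v₂ ^ 2 + v₃ ^ 2 ≠ 0) (he : 0 ≤ v₂ * v₃) (hmin : |v₁| ≤ min |v₂| |v₃|)
    (hdot : v₁ * n₁ + v₂ * n₂ + v₃ * n₃ = 0) :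
    ∃ e₁ e₂ e₃ : ℝ, e₁ ^ 2 + e₂ ^ 2 + e₃ ^ 2 = 1 ∧ 0 ≤ e₂ * e₃ ∧
      |e₁| ≤ min |e₂| |e₃| ∧ e₁ * n₁ + e₂ * n₂ + e₃ * n₃ = 0 := by
  set s := √(v₁ ^ 2 + v₂ ^ 2 + v₃ ^ 2)
  have hs : 0 < s := Real.sqrt_pos.2 (lt_of_le_of_ne (by positivity) hv.symm)
  have hs2 : s ^ 2 = v₁ ^ 2 + v₂ ^ 2 + v₃ ^ 2 := Real.sq_sqrt (by positivity)
  refine ⟨v₁ / s, v₂ / s, v₃ / s, ?_, ?_, ?_, ?_⟩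
  · field_simp
    exact hs2.symm
  · rw [div_mul_div_comm]
    positivity
  · simp only [abs_div, abs_of_pos hs, min_div_div_right hs.le]
    gcongr
  · field_simp
    linear_combination hdot

lemma exists_unit_orthogonal_of_mul_nonpos {n₁ n₂ n₃ : ℝ} (h : n₂ * n₃ ≤ 0) :
    ∃ e₁ e₂ e₃ : ℝ, e₁ ^ 2 + e₂ ^ 2 + e₃ ^ 2 = 1 ∧ 0 ≤ e₂ * e₃ ∧
      |e₁| ≤ min |e₂| |e₃| ∧ e₁ * n₁ + e₂ * n₂ + e₃ * n₃ = 0 := by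
  by_cases h0 : (0 : ℝ) ^ 2 + n₃ ^ 2 + (-n₂) ^ 2 = 0
  · have hn₂ : n₂ = 0 := by nlinarith
    exact ⟨0, 1, 0, by norm_num, by norm_num, by simp, by simp [hn₂]⟩
  · exact exists_unit_orthogonal_of_ne_zero h0 (by linarith) (by simp) (by ring)

lemma exists_unit_orthogonal_of_abs_add_abs_le {n₁ n₂ n₃ : ℝ} (h : |n₂| + |n₃| ≤ |n₁|) :
    ∃ e₁ e₂ e₃ : ℝ, e₁ ^ 2 + e₂ ^ 2 + e₃ ^ 2 = 1 ∧ 0 ≤ e₂ * e₃ ∧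
      |e₁| ≤ min |e₂| |e₃| ∧ e₁ * n₁ + e₂ * n₂ + e₃ * n₃ = 0 := by
  by_cases hn₁ : n₁ = 0
  · have hn₂ : n₂ = 0 := by
      rw [hn₁, abs_zero] at h
      exact abs_nonpos_iff.1 (by linarith [abs_nonneg n₃])
    exact exists_unit_orthogonal_of_mul_nonpos (by simp [hn₂])
  · refine exists_unit_orthogonal_of_ne_zero (v₁ := -(n₂ + n₃)) (v₂ := n₁) (v₃ := n₁)
      (by positivity) (mul_self_nonneg n₁) ?_ (by ring)
    rw [min_self, abs_neg]
    exact (abs_add_le n₂ n₃).trans h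

theorem stmt_10_general (n₁ n₂ n₃ : ℝ) :
    (∃ e₁ e₂ e₃ : ℝ, e₁ ^ 2 + e₂ ^ 2 + e₃ ^ 2 = 1 ∧ 0 ≤ e₂ * e₃ ∧
      |e₁| ≤ min |e₂| |e₃| ∧ e₁ * n₁ + e₂ * n₂ + e₃ * n₃ = 0) ↔
    (n₂ * n₃ ≤ 0 ∨ |n₂| + |n₃| ≤ |n₁|) := by
  constructor
  · rintro ⟨e₁, e₂, e₃, hu, he, hmin, hdot⟩
    rw [or_iff_not_imp_left, not_le]
    exact abs_add_abs_le_abs_of_orthogonal hu he hmin hdot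
  · rintro (h | h)
    · exact exists_unit_orthogonal_of_mul_nonpos h
    · exact exists_unit_orthogonal_of_abs_add_abs_le h

/-- Characterization of the set `𝒩₁` of normals to planes containing a maximal
direction for `U₁`: a unit vector `n` is orthogonal to some unit vector
`e ∈ ℳ₁ = {e : e₂e₃ ≥ 0, |e₁| ≤ min(|e₂|,|e₃|)}` iff `n₂ n₃ ≤ 0` or
`|n₁| ≥ |n₂| + |n₃|`. -/
theorem stmt_10 (α β γ : ℝ) (hβ : 0 < β) (hβ1 : β ≤ 1) (hγ : 1 ≤ γ) (hγα : γ < α)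
    (hB : 0 < β ^ 2 * (α ^ 2 - γ ^ 2))
    (hAB : β ^ 2 * (α ^ 2 - γ ^ 2) < α ^ 2 * γ ^ 2 - β ^ 2 * (α ^ 2 + γ ^ 2) / 2)
    (n₁ n₂ n₃ : ℝ) (hunit : n₁ ^ 2 + n₂ ^ 2 + n₃ ^ 2 = 1) :
    (∃ e₁ e₂ e₃ : ℝ, e₁ ^ 2 + e₂ ^ 2 + e₃ ^ 2 = 1 ∧ 0 ≤ e₂ * e₃ ∧
      |e₁| ≤ min |e₂| |e₃| ∧ e₁ * n₁ + e₂ * n₂ + e₃ * n₃ = 0) ↔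
    (n₂ * n₃ ≤ 0 ∨ |n₂| + |n₃| ≤ |n₁|) :=
  stmt_10_general n₁ n₂ n₃
end

section
/- Fix $0 < \beta \le 1 \le \gamma < \alpha$. If a unit vector $n = (n_1,n_2,n_3)$ satisfies $n_2 n_3 > 0$ and $|n_1| < |n_2| + |n_3|$, then the vector $m = U_1^2 n$ also satisfies $m_2 m_3 > 0$ and $|m_1| < |m_2| + |m_3|$ (after normalization), where $U_1$ is the orthorhombic variant with $U_1^2 n = (\beta^2 n_1,\ \tfrac{\alpha^2+\gamma^2}{2}n_2 + \tfrac{\alpha^2-\gamma^2}{2}n_3,\ \tfrac{\alpha^2-\gamma^2}{2}n_2 + \tfrac{\alpha^2+\gamma^2}{2}n_3)$. -/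
/-
`U₁²` acts on the last two coordinates by the symmetric matrix `[[p, q], [q, p]]` with
`p = (α² + γ²)/2 > 0` and `q = (α² - γ²)/2 ≥ 0`. Nonnegative entries keep `n₂, n₃` of one sign,
so `|m₂| + |m₃| = |m₂ + m₃| = (p + q)|n₂ + n₃| = α² (|n₂| + |n₃|)`, while `|m₁| = β² |n₁|`.
Since `β² ≤ 1 ≤ α²`, the strict inequality `|n₁| < |n₂| + |n₃|` is only reinforced.
-/

lemma abs_add_abs_of_mul_pos {a b : ℝ} (h : 0 < a * b) : |a| + |b| = |a + b| := by
  refine ((abs_add_eq_add_abs_iff a b).2 ?_).symm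
  rcases mul_pos_iff.1 h with ⟨ha, hb⟩ | ⟨ha, hb⟩
  · exact Or.inl ⟨ha.le, hb.le⟩
  · exact Or.inr ⟨ha.le, hb.le⟩

section SymmetricMap

variable {p q n₂ n₃ : ℝ}

lemma mul_pos_symmetric_image (hp : 0 < p) (hq : 0 ≤ q) (hn : 0 < n₂ * n₃) :
    0 < (p * n₂ + q * n₃) * (q * n₂ + p * n₃) := by
  have hexpand : (p * n₂ + q * n₃) * (q * n₂ + p * n₃)
      = p * q * (n₂ ^ 2 + n₃ ^ 2) + (p ^ 2 + q ^ 2) * (n₂ * n₃) := by ring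
  rw [hexpand]
  have : 0 ≤ p * q * (n₂ ^ 2 + n₃ ^ 2) := by positivity
  have : 0 < (p ^ 2 + q ^ 2) * (n₂ * n₃) := by positivity
  linarith

lemma abs_add_abs_symmetric_image (hp : 0 < p) (hq : 0 ≤ q) (hn : 0 < n₂ * n₃) :
    |p * n₂ + q * n₃| + |q * n₂ + p * n₃| = (p + q) * (|n₂| + |n₃|) := by
  rw [abs_add_abs_of_mul_pos (mul_pos_symmetric_image hp hq hn), abs_add_abs_of_mul_pos hn,
    show p * n₂ + q * n₃ + (q * n₂ + p * n₃) = (p + q) * (n₂ + n₃) by ring, abs_mul,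
    abs_of_pos (by linarith)]

end SymmetricMap

theorem stmt_11_general (α β γ : ℝ) (hβ : 0 < β) (hβ1 : β ≤ 1) (hγ : 1 ≤ γ) (hγα : γ < α)
    (n₁ n₂ n₃ : ℝ)
    (hsign : 0 < n₂ * n₃) (hlt : |n₁| < |n₂| + |n₃|) :
    (let m₁ := β ^ 2 * n₁
     let m₂ := (α ^ 2 + γ ^ 2) / 2 * n₂ + (α ^ 2 - γ ^ 2) / 2 * n₃
     let m₃ := (α ^ 2 - γ ^ 2) / 2 * n₂ + (α ^ 2 + γ ^ 2) / 2 * n₃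
     0 < m₂ * m₃ ∧ |m₁| < |m₂| + |m₃|) := by
  intro m₁ m₂ m₃
  have hp : 0 < (α ^ 2 + γ ^ 2) / 2 := by positivity
  have hq : 0 ≤ (α ^ 2 - γ ^ 2) / 2 := by nlinarith
  have hβ2 : β ^ 2 ≤ 1 := pow_le_one₀ hβ.le hβ1
  have hα2 : 1 ≤ α ^ 2 := one_le_pow₀ (by linarith)
  refine ⟨mul_pos_symmetric_image hp hq hsign, ?_⟩
  calc |m₁| = β ^ 2 * |n₁| := by rw [abs_mul, abs_of_nonneg (sq_nonneg β)]
    _ ≤ |n₁| := mul_le_of_le_one_left (abs_nonneg n₁) hβ2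
    _ < |n₂| + |n₃| := hlt
    _ ≤ α ^ 2 * (|n₂| + |n₃|) := le_mul_of_one_le_left (by positivity) hα2
    _ = |m₂| + |m₃| := by
      rw [abs_add_abs_symmetric_image hp hq hsign]
      ring

/-- The property `n₂n₃ > 0 ∧ |n₁| < |n₂| + |n₃|` (of not lying in `𝒩₁`) is
preserved under the linear map `U₁²`. -/
theorem stmt_11 (α β γ : ℝ) (hβ : 0 < β) (hβ1 : β ≤ 1) (hγ : 1 ≤ γ) (hγα : γ < α)
    (n₁ n₂ n₃ : ℝ) (hunit : n₁ ^ 2 + n₂ ^ 2 + n₃ ^ 2 = 1)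
    (hsign : 0 < n₂ * n₃) (hlt : |n₁| < |n₂| + |n₃|) :
    (let m₁ := β ^ 2 * n₁
     let m₂ := (α ^ 2 + γ ^ 2) / 2 * n₂ + (α ^ 2 - γ ^ 2) / 2 * n₃
     let m₃ := (α ^ 2 - γ ^ 2) / 2 * n₂ + (α ^ 2 + γ ^ 2) / 2 * n₃
     0 < m₂ * m₃ ∧ |m₁| < |m₂| + |m₃|) :=
  stmt_11_general α β γ hβ hβ1 hγ hγα n₁ n₂ n₃ hsign hlt
end

section
/- Let $f = U_1^2 e / |U_1^2 e|$ for a unit vector $e$, where $U_1^2 e = (\beta^2 e_1,\ \tfrac{\alpha^2+\gamma^2}{2}e_2 + \tfrac{\alpha^2-\gamma^2}{2}e_3,\ \tfrac{\alpha^2-\gamma^2}{2}e_2 + \tfrac{\alpha^2+\gamma^2}{2}e_3)$ with $0 < \gamma < \alpha$. If $f_2 f_3 < 0$ then $e_2 e_3 < 0$; in particular, $e$ does not satisfy $e_2 e_3 \ge 0$. -/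
/-! The map `(x, y) ↦ (p x + q y, q x + p y)` with `p, q ≥ 0` preserves the closed quadrants
`x y ≥ 0`, as `(p x + q y)(q x + p y) = p q (x² + y²) + (p² + q²) x y`. For `U₁²` on the
`(e₂, e₃)`-plane, `p = (α² + γ²)/2` and `q = (α² - γ²)/2` are nonnegative once `0 < γ < α`. -/

theorem mul_nonneg_of_swap_comb {R : Type*} [CommRing R] [LinearOrder R] [IsStrictOrderedRing R]
    {p q x y : R} (hp : 0 ≤ p) (hq : 0 ≤ q) (hxy : 0 ≤ x * y) :
    0 ≤ (p * x + q * y) * (q * x + p * y) := by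
  have hexpand : (p * x + q * y) * (q * x + p * y) =
      p * q * (x ^ 2 + y ^ 2) + (p ^ 2 + q ^ 2) * (x * y) := by ring
  rw [hexpand]
  exact add_nonneg (by positivity) (mul_nonneg (by positivity) hxy)

theorem stmt_12_general (α γ : ℝ) (hγ : 0 < γ) (hγα : γ < α)
    (e₂ e₃ : ℝ)
    (hf : ((α ^ 2 + γ ^ 2) / 2 * e₂ + (α ^ 2 - γ ^ 2) / 2 * e₃) *
          ((α ^ 2 - γ ^ 2) / 2 * e₂ + (α ^ 2 + γ ^ 2) / 2 * e₃) < 0) :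
    e₂ * e₃ < 0 ∧ ¬ (0 ≤ e₂ * e₃) := by
  have hq : 0 ≤ (α ^ 2 - γ ^ 2) / 2 := by
    have := pow_le_pow_left₀ hγ.le hγα.le 2
    linarith
  have hneg : ¬ 0 ≤ e₂ * e₃ := fun hnonneg =>
    hf.not_ge (mul_nonneg_of_swap_comb (by positivity) hq hnonneg)
  exact ⟨not_le.mp hneg, hneg⟩

/-- If `f = U₁² e / |U₁² e|` satisfies `f₂ f₃ < 0`, then `e₂ e₃ < 0`; in
particular `e` is not a maximal direction for `U₁` (which requires `e₂e₃ ≥ 0`).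
Normalization is immaterial for the sign condition. -/
theorem stmt_12 (α γ : ℝ) (hγ : 0 < γ) (hγα : γ < α)
    (e₁ e₂ e₃ : ℝ) (hunit : e₁ ^ 2 + e₂ ^ 2 + e₃ ^ 2 = 1)
    (hf : ((α ^ 2 + γ ^ 2) / 2 * e₂ + (α ^ 2 - γ ^ 2) / 2 * e₃) *
          ((α ^ 2 - γ ^ 2) / 2 * e₂ + (α ^ 2 + γ ^ 2) / 2 * e₃) < 0) :
    e₂ * e₃ < 0 ∧ ¬ (0 ≤ e₂ * e₃) :=
  stmt_12_general α γ hγ hγα e₂ e₃ hf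
end
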